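/- arXiv:math/0308054 — 2 statements merged into one kernel-verified Lean document; each statement's English description precedes it below -/
import Mathlib

section
/- The category Flow of flows is complete and cocomplete. A terminal object is the flow 𝟏 with 0-skeleton {0} and path space a single point {u}, and an initial object is the unique flow whose underlying set (0-skeleton and path space) is empty. -/
open CategoryTheory Topology unitInterval

set_option autoImplicit false

/-- A flow: discrete 0-skeleton `State`, path space `Path`, source and target maps
(continuous with respect to the discrete topology on `State`), and a continuous
associative partial composition law defined on composable pairs. -/
structure Flow' : Type 1 where
  State : Type
  Path : Type
  [topPath : TopologicalSpace Path]
  s : Path → State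
  t : Path → State
  continuous_s : @Continuous Path State topPath ⊥ s
  continuous_t : @Continuous Path State topPath ⊥ t
  comp : ∀ x y : Path, t x = s y → Path
  s_comp : ∀ x y h, s (comp x y h) = s x
  t_comp : ∀ x y h, t (comp x y h) = t y
  comp_assoc : ∀ (x y z : Path) (h₁ : t x = s y) (h₂ : t y = s z),
      comp (comp x y h₁) z ((t_comp x y h₁).trans h₂) =
      comp x (comp y z h₂) (h₁.trans (s_comp y z h₂).symm)
  continuous_comp : Continuous (fun p : {p : Path × Path // t p.1 = s p.2} =>
      comp p.1.1 p.1.2 p.2)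

attribute [instance] Flow'.topPath

/-- Morphisms of flows. -/
structure FlowHom (X Y : Flow') : Type where
  toState : X.State → Y.State
  toPath : X.Path → Y.Path
  continuous_toPath : Continuous toPath
  s_toPath : ∀ x, Y.s (toPath x) = toState (X.s x)
  t_toPath : ∀ x, Y.t (toPath x) = toState (X.t x)
  comp_toPath : ∀ x y (h : X.t x = X.s y),
      toPath (X.comp x y h) =
      Y.comp (toPath x) (toPath y)
        (((t_toPath x).trans (congrArg toState h)).trans (s_toPath y).symm)

theorem FlowHom.ext' {X Y : Flow'} {f g : FlowHom X Y}
    (h1 : f.toState = g.toState) (h2 : f.toPath = g.toPath) : f = g := by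
  cases f; cases g; cases h1; cases h2; rfl

/-- The identity morphism of flows. -/
def FlowHom.id (X : Flow') : FlowHom X X where
  toState := fun a => a
  toPath := fun x => x
  continuous_toPath := continuous_id
  s_toPath _ := rfl
  t_toPath _ := rfl
  comp_toPath _ _ _ := rfl

/-- Composition of morphisms of flows. -/
def FlowHom.comp {X Y Z : Flow'} (f : FlowHom X Y) (g : FlowHom Y Z) : FlowHom X Z where
  toState := fun a => g.toState (f.toState a)
  toPath := fun x => g.toPath (f.toPath x)
  continuous_toPath := g.continuous_toPath.comp f.continuous_toPath
  s_toPath x := by rw [g.s_toPath, f.s_toPath]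
  t_toPath x := by rw [g.t_toPath, f.t_toPath]
  comp_toPath x y h := by rw [f.comp_toPath, g.comp_toPath]

instance : Category Flow' where
  Hom := FlowHom
  id := FlowHom.id
  comp := FlowHom.comp
  id_comp _ := FlowHom.ext' rfl rfl
  comp_id _ := FlowHom.ext' rfl rfl
  assoc _ _ _ := FlowHom.ext' rfl rfl

/-- The space of morphisms of flows `FLOW(X,Y)`, topologized (via the compact-open
topology on the path-space mapping and the topology of a discrete 0-skeleton). -/
instance FlowHom.instTopologicalSpace (X Y : Flow') : TopologicalSpace (X ⟶ Y) :=
  letI : TopologicalSpace Y.State := ⊥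
  TopologicalSpace.induced
    (fun f : FlowHom X Y => ((f.toState, ⟨f.toPath, f.continuous_toPath⟩) :
      (X.State → Y.State) × C(X.Path, Y.Path)))
    inferInstance

/-- The globe of a topological space. -/
def Glob (Z : Type) [TopologicalSpace Z] : Flow' where
  State := Bool
  Path := Z
  s _ := false
  t _ := true
  continuous_s := continuous_const
  continuous_t := continuous_const
  comp _ _ h := absurd h (by simp)
  s_comp _ _ h := absurd h (by simp)
  t_comp _ _ h := absurd h (by simp)
  comp_assoc _ _ _ h₁ _ := absurd h₁ (by simp)
  continuous_comp := continuous_of_const fun a _ => absurd a.2 (by simp)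

theorem Glob.not_composable {Z : Type} [TopologicalSpace Z] (x y : (Glob Z).Path) :
    ¬ (Glob Z).t x = (Glob Z).s y := by simp [Glob]

/-- The morphism of globes induced by a continuous map. -/
def globHom {U V : Type} [TopologicalSpace U] [TopologicalSpace V] (g : C(U, V)) :
    Glob U ⟶ Glob V where
  toState := fun b => b
  toPath := g
  continuous_toPath := g.continuous
  s_toPath _ := rfl
  t_toPath _ := rfl
  comp_toPath x y h := absurd h (Glob.not_composable x y)

/-- The flow with 0-skeleton `S` and no nonconstant execution paths. -/
def discreteFlow (S : Type) : Flow' where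
  State := S
  Path := Empty
  s := Empty.elim
  t := Empty.elim
  continuous_s := by letI : TopologicalSpace S := ⊥; exact continuous_of_const fun a => a.elim
  continuous_t := by letI : TopologicalSpace S := ⊥; exact continuous_of_const fun a => a.elim
  comp x := x.elim
  s_comp x := x.elim
  t_comp x := x.elim
  comp_assoc x := x.elim
  continuous_comp := continuous_of_const fun a => a.1.1.elim

/-- The initial flow (empty 0-skeleton, empty path space). -/
def emptyFlow : Flow' := discreteFlow Empty

/-- The terminal flow `𝟏`: one state `0` and one nonconstant execution path `u`. -/
def oneFlow : Flow' where
  State := PUnit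
  Path := PUnit
  s _ := PUnit.unit
  t _ := PUnit.unit
  continuous_s := continuous_const
  continuous_t := continuous_const
  comp _ _ _ := PUnit.unit
  s_comp _ _ _ := rfl
  t_comp _ _ _ := rfl
  comp_assoc _ _ _ _ _ := rfl
  continuous_comp := continuous_const

/-- The morphism of flows from a point to a flow determined by a state. -/
def ptHom (Y : Flow') (st : Y.State) : discreteFlow PUnit ⟶ Y where
  toState _ := st
  toPath x := x.elim
  continuous_toPath := continuous_of_const fun a => a.elim
  s_toPath x := x.elim
  t_toPath x := x.elim
  comp_toPath x := x.elim


/-! ### Auxiliary machinery -/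

theorem Flow'.comp_congr (Y : Flow') {x x' y y' : Y.Path} (hx : x = x') (hy : y = y')
    {h : Y.t x = Y.s y} :
    Y.comp x y h = Y.comp x' y' (hx ▸ hy ▸ h) := by subst hx; subst hy; rfl

/-- A "flow without topology". -/
structure PreFlow : Type 1 where
  State : Type
  Path : Type
  s : Path → State
  t : Path → State
  comp : ∀ x y : Path, t x = s y → Path
  s_comp : ∀ x y h, s (comp x y h) = s x
  t_comp : ∀ x y h, t (comp x y h) = t y
  comp_assoc : ∀ (x y z : Path) (h₁ : t x = s y) (h₂ : t y = s z),
      comp (comp x y h₁) z ((t_comp x y h₁).trans h₂) =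
      comp x (comp y z h₂) (h₁.trans (s_comp y z h₂).symm)

namespace PreFlow

variable (P : PreFlow)

/-- The space of composable pairs (as a type; topology comes from a choice of topology
on `P.Path`). -/
abbrev Cmp : Type := {p : P.Path × P.Path // P.t p.1 = P.s p.2}

/-- The topology on composable pairs induced by a topology on paths. -/
def cmpTop (T : TopologicalSpace P.Path) : TopologicalSpace P.Cmp :=
  @instTopologicalSpaceSubtype _ _ (@instTopologicalSpaceProd _ _ T T)

theorem cmpTop_mono {T T' : TopologicalSpace P.Path} (h : T ≤ T') :
    P.cmpTop T ≤ P.cmpTop T' :=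
  induced_mono (inf_le_inf (induced_mono h) (induced_mono h))

section
variable {ι : Type} (X : ι → Flow') (ℓ : ∀ i, (X i).Path → P.Path)

/-- A topology on `P.Path` is good if the legs `ℓ i` are continuous, `s` and `t` are
continuous to the discrete state space, and composition is continuous. -/
def good (T : TopologicalSpace P.Path) : Prop :=
  (∀ i, Continuous[(X i).topPath, T] (ℓ i)) ∧
  Continuous[T, ⊥] P.s ∧ Continuous[T, ⊥] P.t ∧
  @Continuous P.Cmp P.Path (P.cmpTop T) T (fun p => P.comp p.1.1 p.1.2 p.2)

/-- The source-target topology. -/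
def stTop : TopologicalSpace P.Path :=
  TopologicalSpace.induced P.s ⊥ ⊓ TopologicalSpace.induced P.t ⊥

section GoodHyp

theorem good_stTop
    (hs : ∀ i, Continuous[(X i).topPath, ⊥] (fun p => P.s (ℓ i p)))
    (ht : ∀ i, Continuous[(X i).topPath, ⊥] (fun p => P.t (ℓ i p))) :
    P.good X ℓ P.stTop := by
  have hsc : Continuous[P.stTop, ⊥] P.s :=
    continuous_le_dom inf_le_left continuous_induced_dom
  have htc : Continuous[P.stTop, ⊥] P.t :=
    continuous_le_dom inf_le_right continuous_induced_dom
  refine ⟨fun i => continuous_inf_rng.2 ⟨continuous_induced_rng.2 (hs i),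
      continuous_induced_rng.2 (ht i)⟩, hsc, htc, ?_⟩
  letI : TopologicalSpace P.Path := P.stTop
  letI : TopologicalSpace P.State := (⊥ : TopologicalSpace P.State)
  have hval : Continuous (Subtype.val : P.Cmp → P.Path × P.Path) := continuous_subtype_val
  refine continuous_inf_rng.2 ⟨continuous_induced_rng.2 ?_, continuous_induced_rng.2 ?_⟩
  · show Continuous fun p : P.Cmp => P.s (P.comp p.1.1 p.1.2 p.2)
    rw [show (fun p : P.Cmp => P.s (P.comp p.1.1 p.1.2 p.2)) = fun p : P.Cmp => P.s p.1.1
      from funext fun p => P.s_comp _ _ _]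
    exact hsc.comp (continuous_fst.comp hval)
  · show Continuous fun p : P.Cmp => P.t (P.comp p.1.1 p.1.2 p.2)
    rw [show (fun p : P.Cmp => P.t (P.comp p.1.1 p.1.2 p.2)) = fun p : P.Cmp => P.t p.1.2
      from funext fun p => P.t_comp _ _ _]
    exact htc.comp (continuous_snd.comp hval)

/-- The colimit-type topology: the finest topology that is good. -/
def cTop : TopologicalSpace P.Path := sInf {T | P.good X ℓ T}

theorem good_cTop
    (hs : ∀ i, Continuous[(X i).topPath, ⊥] (fun p => P.s (ℓ i p)))
    (ht : ∀ i, Continuous[(X i).topPath, ⊥] (fun p => P.t (ℓ i p))) : P.good X ℓ (P.cTop X ℓ) := by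
  have hgst := P.good_stTop X ℓ hs ht
  refine ⟨fun i => continuous_sInf_rng.2 fun T hT => hT.1 i,
    continuous_sInf_dom hgst hgst.2.1,
    continuous_sInf_dom hgst hgst.2.2.1, ?_⟩
  refine continuous_sInf_rng.2 fun T hT => ?_
  exact continuous_le_dom (P.cmpTop_mono (sInf_le hT)) hT.2.2.2

/-- The flow built on a preflow together with a sink of flows. -/
def toFlow
    (hs : ∀ i, Continuous[(X i).topPath, ⊥] (fun p => P.s (ℓ i p)))
    (ht : ∀ i, Continuous[(X i).topPath, ⊥] (fun p => P.t (ℓ i p))) : Flow' where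
  State := P.State
  Path := P.Path
  topPath := P.cTop X ℓ
  s := P.s
  t := P.t
  continuous_s := (P.good_cTop X ℓ hs ht).2.1
  continuous_t := (P.good_cTop X ℓ hs ht).2.2.1
  comp := P.comp
  s_comp := P.s_comp
  t_comp := P.t_comp
  comp_assoc := P.comp_assoc
  continuous_comp := (P.good_cTop X ℓ hs ht).2.2.2

theorem continuous_leg
    (hs : ∀ i, Continuous[(X i).topPath, ⊥] (fun p => P.s (ℓ i p)))
    (ht : ∀ i, Continuous[(X i).topPath, ⊥] (fun p => P.t (ℓ i p))) (i : ι) :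
    Continuous[(X i).topPath, P.cTop X ℓ] (ℓ i) :=
  (P.good_cTop X ℓ hs ht).1 i

/-- Continuity of a map out of the colimit-type topology. -/
theorem continuous_desc
    (hs : ∀ i, Continuous[(X i).topPath, ⊥] (fun p => P.s (ℓ i p)))
    (ht : ∀ i, Continuous[(X i).topPath, ⊥] (fun p => P.t (ℓ i p))) (Y : Flow') (h : P.Path → Y.Path) (h₀ : P.State → Y.State)
    (hcs : ∀ p, Y.s (h p) = h₀ (P.s p)) (hct : ∀ p, Y.t (h p) = h₀ (P.t p))
    (hcc : ∀ x y (hxy : P.t x = P.s y), h (P.comp x y hxy) = Y.comp (h x) (h y)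
      (by rw [hct, hcs, hxy]))
    (hl : ∀ i, Continuous fun p => h (ℓ i p)) :
    Continuous[P.cTop X ℓ, Y.topPath] h := by
  set T' : TopologicalSpace P.Path := TopologicalSpace.induced h Y.topPath ⊓ P.stTop with hT'
  have hgst := P.good_stTop X ℓ hs ht
  have hT'le : T' ≤ P.stTop := inf_le_right
  have hcont : Continuous[T', Y.topPath] h :=
    continuous_le_dom inf_le_left continuous_induced_dom
  have hgood : P.good X ℓ T' := by
    refine ⟨fun i => continuous_inf_rng.2 ⟨continuous_induced_rng.2 (hl i), hgst.1 i⟩,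
      continuous_le_dom hT'le hgst.2.1, continuous_le_dom hT'le hgst.2.2.1, ?_⟩
    refine continuous_inf_rng.2 ⟨continuous_induced_rng.2 ?_,
      continuous_le_dom (P.cmpTop_mono hT'le) hgst.2.2.2⟩
    show Continuous fun p : P.Cmp => h (P.comp p.1.1 p.1.2 p.2)
    letI : TopologicalSpace P.Path := T'
    have hval : Continuous (Subtype.val : P.Cmp → P.Path × P.Path) := continuous_subtype_val
    have hΦ : Continuous (fun p : P.Cmp =>
        (⟨(h p.1.1, h p.1.2), by rw [hct, hcs]; exact congrArg h₀ p.2⟩ :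
          {q : Y.Path × Y.Path // Y.t q.1 = Y.s q.2})) := by
      refine Continuous.subtype_mk ?_ _
      exact (hcont.comp (continuous_fst.comp hval)).prodMk
        (hcont.comp (continuous_snd.comp hval))
    have hcmp := Y.continuous_comp.comp hΦ
    convert hcmp using 1
    funext p
    exact hcc _ _ _
  exact continuous_sInf_dom hgood hcont

end GoodHyp
end
end PreFlow


/-! ### Colimits of flows -/

namespace FlowColim

open CategoryTheory.Limits

theorem head_eq_head {α : Type} {l l' : List α} (e : l = l') (h : l ≠ []) (h' : l' ≠ []) :
    l.head h = l'.head h' := by subst e; rfl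

theorem getLast_eq_getLast {α : Type} {l l' : List α} (e : l = l') (h : l ≠ []) (h' : l' ≠ []) :
    l.getLast h = l'.getLast h' := by subst e; rfl

variable {J : Type} [SmallCategory J] (F : J ⥤ Flow')

/-- Relation generating the colimit of states. -/
def rS (a b : Σ j, (F.obj j).State) : Prop := ∃ φ : a.1 ⟶ b.1, (F.map φ).toState a.2 = b.2

/-- The colimit of states. -/
def SQ : Type := Quot (rS F)

def πS (a : Σ j, (F.obj j).State) : SQ F := Quot.mk _ a

/-- Letters: paths of the various flows in the diagram. -/
abbrev Λ : Type := Σ j, (F.obj j).Path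

def sΛ (x : Λ F) : SQ F := πS F ⟨x.1, (F.obj x.1).s x.2⟩
def tΛ (x : Λ F) : SQ F := πS F ⟨x.1, (F.obj x.1).t x.2⟩

/-- Linkedness of letters. -/
def lk (x y : Λ F) : Prop := tΛ F x = sΛ F y

/-- Words: nonempty composable lists of letters. -/
def W : Type := {l : List (Λ F) // l ≠ [] ∧ l.Chain' (lk F)}

def sW (w : W F) : SQ F := sΛ F (w.1.head w.2.1)
def tW (w : W F) : SQ F := tΛ F (w.1.getLast w.2.1)

/-- The basic relations on words. -/
inductive B : List (Λ F) → List (Λ F) → Prop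
  | mapRel {i j : J} (φ : i ⟶ j) (p : (F.obj i).Path) :
      B [⟨i, p⟩] [⟨j, FlowHom.toPath (F.map φ) p⟩]
  | compRel {j : J} (p q : (F.obj j).Path) (h : (F.obj j).t p = (F.obj j).s q) :
      B [⟨j, p⟩, ⟨j, q⟩] [⟨j, (F.obj j).comp p q h⟩]

theorem B.left_ne_nil {u v : List (Λ F)} (h : B F u v) : u ≠ [] := by cases h <;> simp
theorem B.right_ne_nil {u v : List (Λ F)} (h : B F u v) : v ≠ [] := by cases h <;> simp

theorem B.sΛ_head {u v : List (Λ F)} (h : B F u v) (hu : u ≠ []) (hv : v ≠ []) :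
    sΛ F (u.head hu) = sΛ F (v.head hv) := by
  cases h with
  | @mapRel i j φ p =>
      show sΛ F ⟨i, p⟩ = sΛ F ⟨j, FlowHom.toPath (F.map φ) p⟩
      unfold sΛ
      rw [FlowHom.s_toPath]
      exact Quot.sound ⟨φ, rfl⟩
  | @compRel j p q hpq =>
      show sΛ F ⟨j, p⟩ = sΛ F ⟨j, (F.obj j).comp p q hpq⟩
      unfold sΛ
      rw [(F.obj j).s_comp]

theorem B.tΛ_last {u v : List (Λ F)} (h : B F u v) (hu : u ≠ []) (hv : v ≠ []) :
    tΛ F (u.getLast hu) = tΛ F (v.getLast hv) := by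
  cases h with
  | @mapRel i j φ p =>
      show tΛ F ⟨i, p⟩ = tΛ F ⟨j, FlowHom.toPath (F.map φ) p⟩
      unfold tΛ
      rw [FlowHom.t_toPath]
      exact Quot.sound ⟨φ, rfl⟩
  | @compRel j p q hpq =>
      show tΛ F ⟨j, q⟩ = tΛ F ⟨j, (F.obj j).comp p q hpq⟩
      unfold tΛ
      rw [(F.obj j).t_comp]

/-- The relation on words: a basic relation in context. -/
def R (w w' : W F) : Prop :=
  ∃ l₁ l₂ u v, B F u v ∧ w.1 = l₁ ++ u ++ l₂ ∧ w'.1 = l₁ ++ v ++ l₂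

theorem R.sW_eq {w w' : W F} (h : R F w w') : sW F w = sW F w' := by
  obtain ⟨l₁, l₂, u, v, hB, h1, h2⟩ := h
  have hu := hB.left_ne_nil
  have hv := hB.right_ne_nil
  cases l₁ with
  | nil =>
      simp only [List.nil_append] at h1 h2
      unfold sW
      rw [head_eq_head h1 w.2.1 (by simp [hu]), head_eq_head h2 w'.2.1 (by simp [hv]),
        List.head_append_left hu, List.head_append_left hv]
      exact B.sΛ_head F hB hu hv
  | cons a l =>
      unfold sW
      rw [head_eq_head h1 w.2.1 (by simp), head_eq_head h2 w'.2.1 (by simp)]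
      simp

theorem R.tW_eq {w w' : W F} (h : R F w w') : tW F w = tW F w' := by
  obtain ⟨l₁, l₂, u, v, hB, h1, h2⟩ := h
  have hu := hB.left_ne_nil
  have hv := hB.right_ne_nil
  cases l₂ with
  | nil =>
      simp only [List.append_nil] at h1 h2
      unfold tW
      rw [getLast_eq_getLast h1 w.2.1 (by simp [hu]), getLast_eq_getLast h2 w'.2.1 (by simp [hv]),
        List.getLast_append_of_ne_nil (l := l₁) (l' := u) _ hu, List.getLast_append_of_ne_nil (l := l₁) (l' := v) _ hv]
      exact B.tΛ_last F hB hu hv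
  | cons a l =>
      unfold tW
      rw [getLast_eq_getLast h1 w.2.1 (by simp), getLast_eq_getLast h2 w'.2.1 (by simp),
        getLast_eq_getLast (List.append_assoc l₁ u (a :: l)) _ (by simp),
        getLast_eq_getLast (List.append_assoc l₁ v (a :: l)) _ (by simp),
        List.getLast_append_of_ne_nil (l := l₁) (l' := u ++ a :: l) _ (by simp), List.getLast_append_of_ne_nil (l := u) (l' := a :: l) _ (by simp),
        List.getLast_append_of_ne_nil (l := l₁) (l' := v ++ a :: l) _ (by simp), List.getLast_append_of_ne_nil (l := v) (l' := a :: l) _ (by simp)]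

/-- Concatenation of composable words. -/
def appendW (u v : W F) (h : tW F u = sW F v) : W F :=
  ⟨u.1 ++ v.1, by simp [u.2.1], by
    refine List.isChain_append.2 ⟨u.2.2, v.2.2, ?_⟩
    intro x hx y hy
    rw [List.getLast?_eq_getLast u.2.1, Option.mem_some_iff] at hx
    rw [List.head?_eq_head v.2.1, Option.mem_some_iff] at hy
    subst hx; subst hy
    exact h⟩

/-- The colimit of path spaces, as a set. -/
def QP : Type := Quot (R F)

def mkQ : W F → QP F := Quot.mk _

def sQ : QP F → SQ F := Quot.lift (sW F) fun _ _ h => h.sW_eq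
def tQ : QP F → SQ F := Quot.lift (tW F) fun _ _ h => h.tW_eq

open Classical in
/-- Composition: concatenate if composable. -/
noncomputable def compW (u v : W F) : QP F :=
  if h : tW F u = sW F v then mkQ F (appendW F u v h) else mkQ F u

theorem compW_left {u u' : W F} (v : W F) (h : R F u u') : compW F u v = compW F u' v := by
  have hts : tW F u = tW F u' := h.tW_eq
  obtain ⟨l₁, l₂, a, b, hB, h1, h2⟩ := h
  unfold compW
  by_cases hc : tW F u = sW F v
  · rw [dif_pos hc, dif_pos (hts ▸ hc)]
    refine Quot.sound ⟨l₁, l₂ ++ v.1, a, b, hB, ?_, ?_⟩ <;>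
      simp [appendW, h1, h2, List.append_assoc]
  · rw [dif_neg hc, dif_neg (hts ▸ hc)]
    exact Quot.sound ⟨l₁, l₂, a, b, hB, h1, h2⟩

theorem compW_right (u : W F) {v v' : W F} (h : R F v v') : compW F u v = compW F u v' := by
  have hss : sW F v = sW F v' := h.sW_eq
  obtain ⟨l₁, l₂, a, b, hB, h1, h2⟩ := h
  unfold compW
  by_cases hc : tW F u = sW F v
  · rw [dif_pos hc, dif_pos (hss ▸ hc)]
    refine Quot.sound ⟨u.1 ++ l₁, l₂, a, b, hB, ?_, ?_⟩ <;>
      simp [appendW, h1, h2, List.append_assoc]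
  · rw [dif_neg hc, dif_neg (hss ▸ hc)]

noncomputable def compQ : QP F → QP F → QP F :=
  Quot.lift₂ (compW F) (fun u _ _ h => compW_right F u h) (fun _ _ v h => compW_left F v h)

theorem sQ_mk (w : W F) : sQ F (mkQ F w) = sW F w := rfl
theorem tQ_mk (w : W F) : tQ F (mkQ F w) = tW F w := rfl

theorem compQ_mk (u v : W F) (h : tW F u = sW F v) :
    compQ F (mkQ F u) (mkQ F v) = mkQ F (appendW F u v h) := by
  show compW F u v = _
  rw [compW, dif_pos h]

/-- The colimit preflow. -/
noncomputable def colimPre : PreFlow where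
  State := SQ F
  Path := QP F
  s := sQ F
  t := tQ F
  comp := fun x y _ => compQ F x y
  s_comp := by
    intro x y h
    induction x using Quot.ind with | _ u =>
    induction y using Quot.ind with | _ v =>
    show sQ F (compQ F (mkQ F u) (mkQ F v)) = sQ F (mkQ F u)
    rw [compQ_mk F u v h, sQ_mk, sQ_mk]
    unfold sW appendW
    rw [head_eq_head (rfl : u.1 ++ v.1 = u.1 ++ v.1) _ (by simp [u.2.1]),
      List.head_append_left u.2.1]
  t_comp := by
    intro x y h
    induction x using Quot.ind with | _ u =>
    induction y using Quot.ind with | _ v =>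
    show tQ F (compQ F (mkQ F u) (mkQ F v)) = tQ F (mkQ F v)
    rw [compQ_mk F u v h, tQ_mk, tQ_mk]
    unfold tW appendW
    rw [getLast_eq_getLast (rfl : u.1 ++ v.1 = u.1 ++ v.1) _ (by simp [u.2.1]),
      List.getLast_append_of_ne_nil (l := u.1) (l' := v.1) _ v.2.1]
  comp_assoc := by
    intro x y z h₁ h₂
    induction x using Quot.ind with | _ u =>
    induction y using Quot.ind with | _ v =>
    induction z using Quot.ind with | _ w =>
    have huv : tW F u = sW F v := h₁
    have hvw : tW F v = sW F w := h₂
    show compQ F (compQ F (mkQ F u) (mkQ F v)) (mkQ F w) =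
      compQ F (mkQ F u) (compQ F (mkQ F v) (mkQ F w))
    rw [compQ_mk F u v huv, compQ_mk F v w hvw]
    have h3 : tW F (appendW F u v huv) = sW F w := by
      unfold tW appendW
      rw [getLast_eq_getLast (rfl : u.1 ++ v.1 = u.1 ++ v.1) _ (by simp [u.2.1]),
        List.getLast_append_of_ne_nil (l := u.1) (l' := v.1) _ v.2.1]
      exact hvw
    have h4 : tW F u = sW F (appendW F v w hvw) := by
      unfold sW appendW
      rw [head_eq_head (rfl : v.1 ++ w.1 = v.1 ++ w.1) _ (by simp [v.2.1]),
        List.head_append_left v.2.1]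
      exact huv
    rw [compQ_mk F _ w h3, compQ_mk F u _ h4]
    apply congrArg (mkQ F)
    apply Subtype.ext
    simp [appendW, List.append_assoc]


/-- Singleton words: the legs of the colimit cocone at path level. -/
def ofj (j : J) (p : (F.obj j).Path) : QP F :=
  mkQ F ⟨[⟨j, p⟩], by simp, List.isChain_singleton _⟩

theorem sQ_ofj (j : J) (p : (F.obj j).Path) :
    sQ F (ofj F j p) = πS F ⟨j, (F.obj j).s p⟩ := rfl
theorem tQ_ofj (j : J) (p : (F.obj j).Path) :
    tQ F (ofj F j p) = πS F ⟨j, (F.obj j).t p⟩ := rfl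

theorem continuous_s_ofj (j : J) :
    Continuous[(F.obj j).topPath, ⊥] (fun p => (colimPre F).s (ofj F j p)) := by
  letI : TopologicalSpace (SQ F) := ⊥
  letI : TopologicalSpace ((F.obj j).State) := (⊥ : TopologicalSpace _)
  have h1 : Continuous fun a : (F.obj j).State => πS F ⟨j, a⟩ := continuous_bot
  exact h1.comp (F.obj j).continuous_s

theorem continuous_t_ofj (j : J) :
    Continuous[(F.obj j).topPath, ⊥] (fun p => (colimPre F).t (ofj F j p)) := by
  letI : TopologicalSpace (SQ F) := ⊥
  letI : TopologicalSpace ((F.obj j).State) := (⊥ : TopologicalSpace _)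
  have h1 : Continuous fun a : (F.obj j).State => πS F ⟨j, a⟩ := continuous_bot
  exact h1.comp (F.obj j).continuous_t

/-- The colimit flow. -/
noncomputable def colimFlow : Flow' :=
  (colimPre F).toFlow (fun j : J => F.obj j) (ofj F) (continuous_s_ofj F) (continuous_t_ofj F)

theorem ofj_comp (j : J) (p q : (F.obj j).Path) (h : (F.obj j).t p = (F.obj j).s q) :
    ofj F j ((F.obj j).comp p q h) = compQ F (ofj F j p) (ofj F j q) := by
  have hc : tW F ⟨[⟨j, p⟩], by simp, List.isChain_singleton _⟩ =
      sW F ⟨[⟨j, q⟩], by simp, List.isChain_singleton _⟩ := by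
    show tΛ F ⟨j, p⟩ = sΛ F ⟨j, q⟩
    unfold tΛ sΛ
    rw [h]
  rw [show compQ F (ofj F j p) (ofj F j q) = compW F _ _ from rfl]
  unfold compW
  rw [dif_pos hc]
  exact (Quot.sound ⟨[], [], _, _, B.compRel p q h, rfl, rfl⟩).symm

/-- The legs of the colimit cocone. -/
noncomputable def colimLeg (j : J) : F.obj j ⟶ colimFlow F where
  toState := fun a => πS F ⟨j, a⟩
  toPath := ofj F j
  continuous_toPath :=
    (colimPre F).continuous_leg (fun j : J => F.obj j) (ofj F)
      (continuous_s_ofj F) (continuous_t_ofj F) j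
  s_toPath := fun p => rfl
  t_toPath := fun p => rfl
  comp_toPath := fun p q h => ofj_comp F j p q h

/-- The colimit cocone. -/
noncomputable def colimCocone : Cocone F where
  pt := colimFlow F
  ι :=
    { app := colimLeg F
      naturality := by
        intro i j φ
        refine FlowHom.ext' (funext fun a => ?_) (funext fun p => ?_)
        · exact (Quot.sound ⟨φ, rfl⟩ :
            πS F ⟨i, a⟩ = πS F ⟨j, (F.map φ).toState a⟩).symm
        · exact (Quot.sound ⟨[], [], _, _, B.mapRel φ p, rfl, rfl⟩ :
            ofj F i p = ofj F j (FlowHom.toPath (F.map φ) p)).symm }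

section Desc

variable (c : Cocone F)

/-- Descended map on states. -/
def descS : SQ F → c.pt.State :=
  Quot.lift (fun a => (c.ι.app a.1).toState a.2) (by
    rintro a b ⟨φ, hφ⟩
    show (c.ι.app a.1).toState a.2 = (c.ι.app b.1).toState b.2
    rw [← hφ, ← c.w φ]
    rfl)

/-- The cocone legs, retyped. -/
def kk (j : J) : FlowHom (F.obj j) c.pt := c.ι.app j

theorem wk {i j : J} (φ : i ⟶ j) : FlowHom.comp (F.map φ) (kk F c j) = kk F c i := c.w φ

theorem descS_eq (a : Σ j, (F.obj j).State) : descS F c (πS F a) = (kk F c a.1).toState a.2 := rfl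

/-- Evaluation of a word in the target of a cocone, with its endpoint properties. -/
def evalL : (l : List (Λ F)) → (h : l ≠ []) → l.Chain' (lk F) →
    {z : c.pt.Path // c.pt.s z = descS F c (sΛ F (l.head h)) ∧
      c.pt.t z = descS F c (tΛ F (l.getLast h))}
  | [x], _, _ => ⟨FlowHom.toPath (kk F c x.1) x.2,
      FlowHom.s_toPath (kk F c x.1) x.2, FlowHom.t_toPath (kk F c x.1) x.2⟩
  | x :: y :: l, _, hc =>
      let rest := evalL (y :: l) (by simp) hc.tail
      ⟨c.pt.comp (FlowHom.toPath (kk F c x.1) x.2) rest.1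
        (by
          rw [FlowHom.t_toPath (kk F c x.1) x.2, rest.2.1]
          exact congrArg (descS F c) (List.isChain_cons_cons.1 hc).1),
        by
          rw [c.pt.s_comp]
          exact FlowHom.s_toPath (kk F c x.1) x.2,
        by
          rw [c.pt.t_comp]
          exact rest.2.2⟩

theorem evalL_congr {l l' : List (Λ F)} (e : l = l') {h : l ≠ []} {h' : l' ≠ []}
    {hc : l.Chain' (lk F)} {hc' : l'.Chain' (lk F)} :
    (evalL F c l h hc).1 = (evalL F c l' h' hc').1 := by subst e; rfl

theorem chain_link {l₁ l₂ : List (Λ F)} (h₁ : l₁ ≠ []) (h₂ : l₂ ≠ [])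
    (hc : (l₁ ++ l₂).Chain' (lk F)) : lk F (l₁.getLast h₁) (l₂.head h₂) := by
  obtain ⟨-, -, h3⟩ := List.isChain_append.1 hc
  exact h3 _ (List.getLast?_eq_getLast h₁) _ (List.head?_eq_head h₂)

theorem evalL_cmp (l₁ l₂ : List (Λ F)) (h₁ : l₁ ≠ []) (h₂ : l₂ ≠ [])
    (hc₁ : l₁.Chain' (lk F)) (hc₂ : l₂.Chain' (lk F))
    (hlk : lk F (l₁.getLast h₁) (l₂.head h₂)) :
    c.pt.t (evalL F c l₁ h₁ hc₁).1 = c.pt.s (evalL F c l₂ h₂ hc₂).1 := by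
  rw [(evalL F c l₁ h₁ hc₁).2.2, (evalL F c l₂ h₂ hc₂).2.1]
  exact congrArg (descS F c) hlk

theorem evalL_append : ∀ (l₁ l₂ : List (Λ F)) (h₁ : l₁ ≠ []) (h₂ : l₂ ≠ [])
    (hc₁ : l₁.Chain' (lk F)) (hc₂ : l₂.Chain' (lk F)) (hh : l₁ ++ l₂ ≠ [])
    (hc : (l₁ ++ l₂).Chain' (lk F))
    (hcmp : c.pt.t (evalL F c l₁ h₁ hc₁).1 = c.pt.s (evalL F c l₂ h₂ hc₂).1),
    (evalL F c (l₁ ++ l₂) hh hc).1 =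
      c.pt.comp (evalL F c l₁ h₁ hc₁).1 (evalL F c l₂ h₂ hc₂).1 hcmp
  | [x], l₂, h₁, h₂, hc₁, hc₂, hh, hc, hcmp => by
      cases l₂ with
      | nil => exact absurd rfl h₂
      | cons y l => exact Flow'.comp_congr _ rfl rfl
  | x :: x' :: l₁, l₂, h₁, h₂, hc₁, hc₂, hh, hc, hcmp => by
      have hx : lk F x x' := (List.isChain_cons_cons.1 hc₁).1
      have hcmp' : c.pt.t (evalL F c (x' :: l₁) (by simp) hc₁.tail).1 =
          c.pt.s (evalL F c l₂ h₂ hc₂).1 := by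
        refine evalL_cmp F c _ _ _ _ _ _ ?_
        have := chain_link F (h₁ := (by simp : x :: x' :: l₁ ≠ [])) h₂ hc
        rwa [List.getLast_cons (by simp : x' :: l₁ ≠ [])] at this
      have ih := evalL_append (x' :: l₁) l₂ (by simp) h₂ hc₁.tail hc₂ (by simp)
        hc.tail hcmp'
      have h6 : c.pt.t (FlowHom.toPath (kk F c x.1) x.2) =
          c.pt.s (evalL F c (x' :: l₁) (by simp) hc₁.tail).1 := by
        rw [(evalL F c (x' :: l₁) (by simp) hc₁.tail).2.1, FlowHom.t_toPath (kk F c x.1) x.2]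
        exact congrArg (descS F c) hx
      have h5 : c.pt.t (FlowHom.toPath (kk F c x.1) x.2) =
          c.pt.s (evalL F c ((x' :: l₁) ++ l₂) (by simp) hc.tail).1 := by
        rw [(evalL F c ((x' :: l₁) ++ l₂) (by simp) hc.tail).2.1,
          FlowHom.t_toPath (kk F c x.1) x.2]
        exact congrArg (descS F c) hx
      calc (evalL F c ((x :: x' :: l₁) ++ l₂) hh hc).1
          = c.pt.comp (FlowHom.toPath (kk F c x.1) x.2)
              (evalL F c ((x' :: l₁) ++ l₂) (by simp) hc.tail).1 h5 := rfl
        _ = c.pt.comp (FlowHom.toPath (kk F c x.1) x.2)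
              (c.pt.comp (evalL F c (x' :: l₁) (by simp) hc₁.tail).1
                (evalL F c l₂ h₂ hc₂).1 hcmp')
              (by rw [c.pt.s_comp]; exact h6) := Flow'.comp_congr c.pt rfl ih
        _ = c.pt.comp
              (c.pt.comp (FlowHom.toPath (kk F c x.1) x.2)
                (evalL F c (x' :: l₁) (by simp) hc₁.tail).1 h6)
              (evalL F c l₂ h₂ hc₂).1
              (by rw [c.pt.t_comp]; exact hcmp') :=
            (c.pt.comp_assoc _ _ _ h6 hcmp').symm
        _ = c.pt.comp (evalL F c (x :: x' :: l₁) h₁ hc₁).1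
              (evalL F c l₂ h₂ hc₂).1 hcmp := Flow'.comp_congr c.pt rfl rfl

theorem evalB {u v : List (Λ F)} (hB : B F u v) (hu : u ≠ []) (hv : v ≠ [])
    (hcu : u.Chain' (lk F)) (hcv : v.Chain' (lk F)) :
    (evalL F c u hu hcu).1 = (evalL F c v hv hcv).1 := by
  cases hB with
  | @mapRel i j φ p =>
      exact (congrFun (congrArg FlowHom.toPath (wk F c φ)) p).symm
  | @compRel j p q h =>
      exact (FlowHom.comp_toPath (kk F c j) p q h).symm

/-- Evaluation of words in the target of a cocone. -/
def evalW (w : W F) : c.pt.Path := (evalL F c w.1 w.2.1 w.2.2).1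

theorem s_evalW (w : W F) : c.pt.s (evalW F c w) = descS F c (sW F w) :=
  (evalL F c w.1 w.2.1 w.2.2).2.1

theorem t_evalW (w : W F) : c.pt.t (evalW F c w) = descS F c (tW F w) :=
  (evalL F c w.1 w.2.1 w.2.2).2.2

theorem evalW_R {w w' : W F} (h : R F w w') : evalW F c w = evalW F c w' := by
  obtain ⟨l₁, l₂, u, v, hB, h1, h2⟩ := h
  have hu := hB.left_ne_nil
  have hv := hB.right_ne_nil
  have hcw : (l₁ ++ (u ++ l₂)).Chain' (lk F) := by
    rw [← List.append_assoc, ← h1]; exact w.2.2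
  have hcw' : (l₁ ++ (v ++ l₂)).Chain' (lk F) := by
    rw [← List.append_assoc, ← h2]; exact w'.2.2
  unfold evalW
  rw [evalL_congr F c (h1.trans (List.append_assoc l₁ u l₂)) (h' := by simp [hu]) (hc' := hcw),
    evalL_congr F c (h2.trans (List.append_assoc l₁ v l₂)) (h' := by simp [hv]) (hc' := hcw')]
  cases l₁ with
  | nil =>
      cases l₂ with
      | nil =>
          have hcu : u.Chain' (lk F) :=
            (List.isChain_append.1 (show ((u ++ []) : List (Λ F)).Chain' (lk F) from hcw)).1
          have hcv : v.Chain' (lk F) :=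
            (List.isChain_append.1 (show ((v ++ []) : List (Λ F)).Chain' (lk F) from hcw')).1
          exact (evalL_congr F c (List.append_nil u)).trans
            ((evalB F c hB hu hv hcu hcv).trans
              (evalL_congr F c (List.append_nil v)).symm)
      | cons b m =>
          have hcwu : ((u ++ b :: m) : List (Λ F)).Chain' (lk F) := hcw
          have hcwv : ((v ++ b :: m) : List (Λ F)).Chain' (lk F) := hcw'
          have hcu := (List.isChain_append.1 hcwu).1
          have hcv := (List.isChain_append.1 hcwv).1
          have hc₂ := (List.isChain_append.1 hcwu).2.1
          have e2 := evalL_append F c u (b :: m) hu (by simp) hcu hc₂ (by simp [hu]) hcwu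
            (evalL_cmp F c _ _ _ _ _ _ (chain_link F hu (by simp) hcwu))
          have e2' := evalL_append F c v (b :: m) hv (by simp) hcv hc₂ (by simp [hv]) hcwv
            (evalL_cmp F c _ _ _ _ _ _ (chain_link F hv (by simp) hcwv))
          exact ((evalL_congr F c rfl).trans
              (e2.trans (Flow'.comp_congr c.pt (evalB F c hB hu hv hcu hcv) rfl))).trans
            ((evalL_congr F c rfl).trans e2').symm
  | cons a l =>
      have hc₁ : (a :: l).Chain' (lk F) := (List.isChain_append.1 hcw).1
      cases l₂ with
      | nil =>
          have hcwu : ((a :: l) ++ u).Chain' (lk F) := by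
            rw [List.append_nil] at hcw; exact hcw
          have hcwv : ((a :: l) ++ v).Chain' (lk F) := by
            rw [List.append_nil] at hcw'; exact hcw'
          have hcu := (List.isChain_append.1 hcwu).2.1
          have hcv := (List.isChain_append.1 hcwv).2.1
          have ec : ((a :: l) ++ (u ++ [])) = ((a :: l) ++ u) := by simp
          have ec' : ((a :: l) ++ (v ++ [])) = ((a :: l) ++ v) := by simp
          have e1 := evalL_append F c (a :: l) u (by simp) hu hc₁ hcu (by simp) hcwu
            (evalL_cmp F c _ _ _ _ _ _ (chain_link F (by simp) hu hcwu))
          have e1' := evalL_append F c (a :: l) v (by simp) hv hc₁ hcv (by simp) hcwv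
            (evalL_cmp F c _ _ _ _ _ _ (chain_link F (by simp) hv hcwv))
          exact ((evalL_congr F c ec).trans
              (e1.trans (Flow'.comp_congr c.pt rfl (evalB F c hB hu hv hcu hcv)))).trans
            ((evalL_congr F c ec' (h := by simp) (hc := hcw')).trans e1').symm
      | cons b m =>
          have hcul := (List.isChain_append.1 hcw).2.1
          have hcvl := (List.isChain_append.1 hcw').2.1
          have hcu := (List.isChain_append.1 hcul).1
          have hcv := (List.isChain_append.1 hcvl).1
          have hc₂ := (List.isChain_append.1 hcul).2.1
          have e1 := evalL_append F c (a :: l) (u ++ b :: m) (by simp) (by simp [hu]) hc₁ hcul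
            (by simp) hcw
            (evalL_cmp F c _ _ _ _ _ _ (chain_link F (by simp) (by simp [hu]) hcw))
          have e1' := evalL_append F c (a :: l) (v ++ b :: m) (by simp) (by simp [hv]) hc₁ hcvl
            (by simp) hcw'
            (evalL_cmp F c _ _ _ _ _ _ (chain_link F (by simp) (by simp [hv]) hcw'))
          have e2 := evalL_append F c u (b :: m) hu (by simp) hcu hc₂ (by simp [hu]) hcul
            (evalL_cmp F c _ _ _ _ _ _ (chain_link F hu (by simp) hcul))
          have e2' := evalL_append F c v (b :: m) hv (by simp) hcv hc₂ (by simp [hv]) hcvl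
            (evalL_cmp F c _ _ _ _ _ _ (chain_link F hv (by simp) hcvl))
          exact (e1.trans (Flow'.comp_congr c.pt rfl (e2.trans
              (Flow'.comp_congr c.pt (evalB F c hB hu hv hcu hcv) rfl)))).trans
            ((e1'.trans (Flow'.comp_congr c.pt rfl e2')).symm)

/-- The descended map on paths. -/
def descP : QP F → c.pt.Path := Quot.lift (evalW F c) fun _ _ h => evalW_R F c h

theorem descP_ofj (j : J) (p : (F.obj j).Path) :
    descP F c (ofj F j p) = FlowHom.toPath (kk F c j) p := rfl

theorem s_descP (x : QP F) : c.pt.s (descP F c x) = descS F c (sQ F x) := by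
  induction x using Quot.ind with | _ w => exact s_evalW F c w

theorem t_descP (x : QP F) : c.pt.t (descP F c x) = descS F c (tQ F x) := by
  induction x using Quot.ind with | _ w => exact t_evalW F c w

theorem comp_descP (x y : QP F) (h : tQ F x = sQ F y) :
    descP F c (compQ F x y) = c.pt.comp (descP F c x) (descP F c y)
      (by rw [s_descP, t_descP, h]) := by
  induction x using Quot.ind with | _ u =>
  induction y using Quot.ind with | _ v =>
  have h' : tW F u = sW F v := h
  show descP F c (compW F u v) = _
  rw [compW, dif_pos h']
  show (evalL F c (u.1 ++ v.1) _ _).1 = _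
  refine (evalL_append F c u.1 v.1 u.2.1 v.2.1 u.2.2 v.2.2 _ _
    (evalL_cmp F c u.1 v.1 u.2.1 v.2.1 u.2.2 v.2.2 h')).trans ?_
  exact Flow'.comp_congr c.pt rfl rfl

end Desc

/-- The descended morphism of flows. -/
noncomputable def descHom (c : Cocone F) : colimFlow F ⟶ c.pt where
  toState := descS F c
  toPath := descP F c
  continuous_toPath := by
    refine (colimPre F).continuous_desc (fun j : J => F.obj j) (ofj F)
      (continuous_s_ofj F) (continuous_t_ofj F) c.pt (descP F c) (descS F c)
      (s_descP F c) (t_descP F c) (fun x y hxy => comp_descP F c x y hxy) ?_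
    intro j
    show Continuous fun p => FlowHom.toPath (kk F c j) p
    exact (kk F c j).continuous_toPath
  s_toPath := s_descP F c
  t_toPath := t_descP F c
  comp_toPath := fun x y h => comp_descP F c x y h

theorem mkQ_cons (x : Λ F) (l : List (Λ F)) (hne : x :: l ≠ [])
    (hch : (x :: l).Chain' (lk F)) (hl : l ≠ []) :
    mkQ F ⟨x :: l, hne, hch⟩ =
      compQ F (ofj F x.1 x.2) (mkQ F ⟨l, hl, hch.tail⟩) := by
  have hc : tW F ⟨[x], by simp, List.isChain_singleton _⟩ = sW F ⟨l, hl, hch.tail⟩ := by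
    show tΛ F x = sΛ F (l.head hl)
    have := List.isChain_cons.1 hch
    exact this.1 _ (List.head?_eq_head hl)
  show _ = compW F _ _
  unfold compW
  rw [dif_pos hc]
  refine congrArg (mkQ F) (Subtype.ext ?_)
  show x :: l = [x] ++ l
  simp

/-- The colimit cocone is a colimit. -/
noncomputable def colimIsColimit : IsColimit (colimCocone F) where
  desc := descHom F
  fac := fun c j => FlowHom.ext' (funext fun a => rfl) (funext fun p => rfl)
  uniq := by
    intro c m hm
    have hS : ∀ a : SQ F, m.toState a = descS F c a := by
      intro a
      induction a using Quot.ind with | _ a =>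
      exact congrFun (congrArg FlowHom.toState (hm a.1)) a.2
    have key : ∀ (l : List (Λ F)) (hne : l ≠ []) (hch : l.Chain' (lk F)),
        FlowHom.toPath m (mkQ F ⟨l, hne, hch⟩) = descP F c (mkQ F ⟨l, hne, hch⟩) := by
      intro l
      induction l with
      | nil => intro hne; exact absurd rfl hne
      | cons x l ih =>
          intro hne hch
          cases l with
          | nil =>
              exact congrFun (congrArg FlowHom.toPath (hm x.1)) x.2
          | cons y l =>
              rw [mkQ_cons F x (y :: l) hne hch (by simp)]
              have hcmp : (colimFlow F).t (ofj F x.1 x.2) =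
                  (colimFlow F).s (mkQ F ⟨y :: l, by simp, hch.tail⟩) := by
                show tΛ F x = sΛ F ((y :: l).head (by simp))
                exact (List.isChain_cons.1 hch).1 _ (List.head?_eq_head (by simp))
              show FlowHom.toPath m ((colimCocone F).pt.comp (ofj F x.1 x.2)
                  (mkQ F ⟨y :: l, by simp, hch.tail⟩) hcmp) =
                FlowHom.toPath (descHom F c) ((colimCocone F).pt.comp (ofj F x.1 x.2)
                  (mkQ F ⟨y :: l, by simp, hch.tail⟩) hcmp)
              rw [m.comp_toPath _ _ hcmp]
              refine Eq.trans ?_ (comp_descP F c (ofj F x.1 x.2)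
                (mkQ F ⟨y :: l, by simp, hch.tail⟩) hcmp).symm
              refine Flow'.comp_congr c.pt ?_ (ih (by simp) hch.tail)
              exact congrFun (congrArg FlowHom.toPath (hm x.1)) x.2
    refine FlowHom.ext' (funext hS) (funext fun x => ?_)
    induction x using Quot.ind with | _ w =>
    exact key w.1 w.2.1 w.2.2



end FlowColim


/-! ### Limits of flows -/

namespace FlowLim

open CategoryTheory.Limits

variable {J : Type} [SmallCategory J] (F : J ⥤ Flow')

def LState : Type :=
  {u : ∀ j, (F.obj j).State // ∀ {i j : J} (φ : i ⟶ j), (F.map φ).toState (u i) = u j}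

def LPath : Type :=
  {p : ∀ j, (F.obj j).Path // ∀ {i j : J} (φ : i ⟶ j), FlowHom.toPath (F.map φ) (p i) = p j}

def sL (p : LPath F) : LState F :=
  ⟨fun j => (F.obj j).s (p.1 j), fun {i j} φ => by
    rw [← FlowHom.s_toPath (F.map φ), p.2 φ]⟩

def tL (p : LPath F) : LState F :=
  ⟨fun j => (F.obj j).t (p.1 j), fun {i j} φ => by
    rw [← FlowHom.t_toPath (F.map φ), p.2 φ]⟩

theorem cmp_at {x y : LPath F} (h : tL F x = sL F y) (j : J) :
    (F.obj j).t (x.1 j) = (F.obj j).s (y.1 j) :=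
  congrFun (congrArg Subtype.val h) j

def compL (x y : LPath F) (h : tL F x = sL F y) : LPath F :=
  ⟨fun j => (F.obj j).comp (x.1 j) (y.1 j) (cmp_at F h j), fun {i j} φ => by
    rw [FlowHom.comp_toPath (F.map φ)]
    exact (Flow'.comp_congr _ (x.2 φ) (y.2 φ)).trans (Flow'.comp_congr _ rfl rfl)⟩

/-- The limit topology. -/
def TL : TopologicalSpace (LPath F) :=
  (TopologicalSpace.induced (sL F) ⊥ ⊓ TopologicalSpace.induced (tL F) ⊥) ⊓
    TopologicalSpace.induced (fun p => p.1)
      (@Pi.topologicalSpace J (fun j => (F.obj j).Path) (fun j => (F.obj j).topPath))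

theorem continuous_sL : Continuous[TL F, ⊥] (sL F) :=
  continuous_le_dom (le_trans inf_le_left inf_le_left) continuous_induced_dom

theorem continuous_tL : Continuous[TL F, ⊥] (tL F) :=
  continuous_le_dom (le_trans inf_le_left inf_le_right) continuous_induced_dom

theorem continuous_val :
    Continuous[TL F, @Pi.topologicalSpace J (fun j => (F.obj j).Path)
      (fun j => (F.obj j).topPath)] (fun p => p.1) :=
  continuous_le_dom inf_le_right continuous_induced_dom

set_option maxHeartbeats 1000000 in
theorem continuous_compL :
    @Continuous {p : LPath F × LPath F // tL F p.1 = sL F p.2} (LPath F)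
      (@instTopologicalSpaceSubtype _ _ (@instTopologicalSpaceProd _ _ (TL F) (TL F))) (TL F)
      (fun p => compL F p.1.1 p.1.2 p.2) := by
  refine continuous_inf_rng.2 ⟨continuous_inf_rng.2 ⟨?_, ?_⟩, ?_⟩
  · refine continuous_induced_rng.2 ?_
    letI : TopologicalSpace (LPath F) := TL F
    letI : TopologicalSpace (LState F) := (⊥ : TopologicalSpace (LState F))
    show Continuous fun p : {p : LPath F × LPath F // tL F p.1 = sL F p.2} =>
      sL F (compL F p.1.1 p.1.2 p.2)
    rw [show (fun p : {p : LPath F × LPath F // tL F p.1 = sL F p.2} =>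
          sL F (compL F p.1.1 p.1.2 p.2)) = fun p => sL F p.1.1
      from funext fun p => Subtype.ext (funext fun j => (F.obj j).s_comp _ _ _)]
    exact (continuous_sL F).comp (continuous_fst.comp continuous_subtype_val)
  · refine continuous_induced_rng.2 ?_
    letI : TopologicalSpace (LPath F) := TL F
    letI : TopologicalSpace (LState F) := (⊥ : TopologicalSpace (LState F))
    show Continuous fun p : {p : LPath F × LPath F // tL F p.1 = sL F p.2} =>
      tL F (compL F p.1.1 p.1.2 p.2)
    rw [show (fun p : {p : LPath F × LPath F // tL F p.1 = sL F p.2} =>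
          tL F (compL F p.1.1 p.1.2 p.2)) = fun p => tL F p.1.2
      from funext fun p => Subtype.ext (funext fun j => (F.obj j).t_comp _ _ _)]
    exact (continuous_tL F).comp (continuous_snd.comp continuous_subtype_val)
  · refine continuous_induced_rng.2 ?_
    letI : TopologicalSpace (LPath F) := TL F
    show Continuous fun p : {p : LPath F × LPath F // tL F p.1 = sL F p.2} =>
      (compL F p.1.1 p.1.2 p.2).1
    refine continuous_pi fun j => ?_
    show Continuous fun p : {p : LPath F × LPath F // tL F p.1 = sL F p.2} =>
      (F.obj j).comp (p.1.1.1 j) (p.1.2.1 j) (cmp_at F p.2 j)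
    have hΨ : Continuous (fun p : {p : LPath F × LPath F // tL F p.1 = sL F p.2} =>
        (⟨(p.1.1.1 j, p.1.2.1 j), cmp_at F p.2 j⟩ :
          {q : (F.obj j).Path × (F.obj j).Path // (F.obj j).t q.1 = (F.obj j).s q.2})) := by
      refine Continuous.subtype_mk ?_ _
      refine Continuous.prodMk ?_ ?_
      · exact (continuous_apply j).comp
          ((continuous_val F).comp (continuous_fst.comp continuous_subtype_val))
      · exact (continuous_apply j).comp
          ((continuous_val F).comp (continuous_snd.comp continuous_subtype_val))
    exact (F.obj j).continuous_comp.comp hΨ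

/-- The limit flow. -/
def limFlow : Flow' where
  State := LState F
  Path := LPath F
  topPath := TL F
  s := sL F
  t := tL F
  continuous_s := continuous_sL F
  continuous_t := continuous_tL F
  comp := compL F
  s_comp := fun x y h => Subtype.ext (funext fun j => (F.obj j).s_comp _ _ _)
  t_comp := fun x y h => Subtype.ext (funext fun j => (F.obj j).t_comp _ _ _)
  comp_assoc := fun x y z h₁ h₂ => Subtype.ext (funext fun j =>
    ((F.obj j).comp_assoc (x.1 j) (y.1 j) (z.1 j) (cmp_at F h₁ j) (cmp_at F h₂ j)).trans
      (Flow'.comp_congr _ rfl rfl))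
  continuous_comp := continuous_compL F

/-- The limit cone. -/
def limCone : Cone F where
  pt := limFlow F
  π :=
    { app := fun j =>
        { toState := fun u => u.1 j
          toPath := fun p => p.1 j
          continuous_toPath :=
            (continuous_apply j).comp
              (continuous_le_dom inf_le_right continuous_induced_dom)
          s_toPath := fun p => rfl
          t_toPath := fun p => rfl
          comp_toPath := fun x y h => Flow'.comp_congr _ rfl rfl }
      naturality := by
        intro i j φ
        refine FlowHom.ext' (funext fun u => ?_) (funext fun p => ?_)
        · exact (u.2 φ).symm
        · exact (p.2 φ).symm }

/-- The limit cone is a limit. -/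
def limIsLimit : IsLimit (limCone F) where
  lift c :=
    { toState := fun a => ⟨fun j => (c.π.app j).toState a,
        fun {i j} φ => congrFun (congrArg FlowHom.toState (c.w φ)) a⟩
      toPath := fun z => ⟨fun j => FlowHom.toPath (c.π.app j) z,
        fun {i j} φ => congrFun (congrArg FlowHom.toPath (c.w φ)) z⟩
      continuous_toPath := by
        letI : TopologicalSpace (LState F) := (⊥ : TopologicalSpace (LState F))
        letI : TopologicalSpace
            {u : ∀ j, (F.obj j).State // ∀ {i j : J} (φ : i ⟶ j), (F.map φ).toState (u i) = u j} :=
          (⊥ : TopologicalSpace _)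
        letI : TopologicalSpace c.pt.State := (⊥ : TopologicalSpace c.pt.State)
        show Continuous[_, TL F] _
        refine continuous_inf_rng.2 ⟨continuous_inf_rng.2 ⟨?_, ?_⟩, ?_⟩
        · refine continuous_induced_rng.2 ?_
          have h1 : Continuous fun a : c.pt.State =>
              (⟨fun j => (c.π.app j).toState a,
                fun {i j} φ => congrFun (congrArg FlowHom.toState (c.w φ)) a⟩ : LState F) :=
            continuous_bot
          exact (h1.comp c.pt.continuous_s).congr fun z =>
            Subtype.ext (funext fun j => ((c.π.app j).s_toPath z).symm)
        · refine continuous_induced_rng.2 ?_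
          have h1 : Continuous fun a : c.pt.State =>
              (⟨fun j => (c.π.app j).toState a,
                fun {i j} φ => congrFun (congrArg FlowHom.toState (c.w φ)) a⟩ : LState F) :=
            continuous_bot
          exact (h1.comp c.pt.continuous_t).congr fun z =>
            Subtype.ext (funext fun j => ((c.π.app j).t_toPath z).symm)
        · refine continuous_induced_rng.2 ?_
          exact continuous_pi fun j => (c.π.app j).continuous_toPath
      s_toPath := fun z => Subtype.ext (funext fun j => (c.π.app j).s_toPath z)
      t_toPath := fun z => Subtype.ext (funext fun j => (c.π.app j).t_toPath z)
      comp_toPath := fun x y h => Subtype.ext (funext fun j =>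
        ((c.π.app j).comp_toPath x y h).trans (Flow'.comp_congr _ rfl rfl)) }
  fac := fun c j => FlowHom.ext' (funext fun a => rfl) (funext fun p => rfl)
  uniq := by
    intro c m hm
    refine FlowHom.ext' (funext fun a => ?_) (funext fun z => ?_)
    · exact Subtype.ext (funext fun j => by
        exact congrFun (congrArg FlowHom.toState (hm j)) a)
    · exact Subtype.ext (funext fun j => by
        exact congrFun (congrArg FlowHom.toPath (hm j)) z)

end FlowLim

/-- Terminal morphism to `oneFlow`. -/
def toOneFlow (X : Flow') : X ⟶ oneFlow where
  toState := fun _ => PUnit.unit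
  toPath := fun _ => PUnit.unit
  continuous_toPath := continuous_const
  s_toPath := fun _ => rfl
  t_toPath := fun _ => rfl
  comp_toPath := fun _ _ _ => rfl

/-- Initial morphism from `emptyFlow`. -/
def fromEmptyFlow (X : Flow') : emptyFlow ⟶ X where
  toState := fun a => a.elim
  toPath := fun x => x.elim
  continuous_toPath := continuous_of_const fun a => a.elim
  s_toPath := fun x => x.elim
  t_toPath := fun x => x.elim
  comp_toPath := fun x => x.elim

/-- The category of flows is complete and cocomplete; the flow `𝟏`
(one state, one nonconstant execution path) is a terminal object, and the empty flow
is an initial object. -/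
theorem Flow'.complete_cocomplete_terminal_initial :
    Limits.HasLimits Flow' ∧ Limits.HasColimits Flow' ∧
      Nonempty (Limits.IsTerminal oneFlow) ∧ Nonempty (Limits.IsInitial emptyFlow) := by
  refine ⟨?_, ?_, ?_, ?_⟩
  · exact
      { has_limits_of_shape := fun J _ =>
          { has_limit := fun F =>
              Limits.HasLimit.mk ⟨FlowLim.limCone F, FlowLim.limIsLimit F⟩ } }
  · exact
      { has_colimits_of_shape := fun J _ =>
          { has_colimit := fun F =>
              Limits.HasColimit.mk ⟨FlowColim.colimCocone F, FlowColim.colimIsColimit F⟩ } }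
  · exact ⟨Limits.IsTerminal.ofUniqueHom toOneFlow fun X m =>
      FlowHom.ext' (funext fun _ => rfl) (funext fun _ => rfl)⟩
  · exact ⟨Limits.IsInitial.ofUniqueHom fromEmptyFlow fun X m =>
      FlowHom.ext' (funext fun a => a.elim) (funext fun x => x.elim)⟩
end

section
/- Let (Z, ∂Z) be an NDR pair of topological spaces. Then the canonical morphism of flows Glob(∂Z) → Glob(Z) satisfies the S-homotopy extension property. -/
open CategoryTheory Topology unitInterval

set_option autoImplicit false

/-- An S-homotopy: a continuous `[0,1]`-indexed family of morphisms of flows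
(jointly continuous on paths and, with respect to the discrete topology on the
0-skeletons, on states). -/
structure SHomotopy (X Y : Flow') : Type where
  hs : unitInterval → X.State → Y.State
  hp : unitInterval → X.Path → Y.Path
  continuous_hp : Continuous fun q : unitInterval × X.Path => hp q.1 q.2
  continuous_hs : @Continuous (unitInterval × X.State) Y.State
      (@instTopologicalSpaceProd _ _ _ ⊥) ⊥ (fun q => hs q.1 q.2)
  s_hp : ∀ u x, Y.s (hp u x) = hs u (X.s x)
  t_hp : ∀ u x, Y.t (hp u x) = hs u (X.t x)
  comp_hp : ∀ u x y (h : X.t x = X.s y),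
      hp u (X.comp x y h) = Y.comp (hp u x) (hp u y)
        (((t_hp u x).trans (congrArg (hs u) h)).trans ((s_hp u y)).symm)

/-- The morphism of flows obtained from an S-homotopy at time `u`. -/
def SHomotopy.at {X Y : Flow'} (H : SHomotopy X Y) (u : unitInterval) : X ⟶ Y where
  toState := H.hs u
  toPath := H.hp u
  continuous_toPath := H.continuous_hp.comp (Continuous.prodMk_right u)
  s_toPath x := H.s_hp u x
  t_toPath x := H.t_hp u x
  comp_toPath x y h := H.comp_hp u x y h

/-- Two morphisms of flows are S-homotopic if they are the endpoints of an
S-homotopy. -/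
def SHomotopic {X Y : Flow'} (f g : X ⟶ Y) : Prop :=
  ∃ H : SHomotopy X Y, H.at 0 = f ∧ H.at 1 = g

/-- The S-homotopy extension property for a morphism of flows `i : A ⟶ X`. -/
def HasSHEP {A X : Flow'} (i : A ⟶ X) : Prop :=
  ∀ (Y : Flow') (f : X ⟶ Y) (h : SHomotopy A Y), h.at 0 = i ≫ f →
    ∃ H : SHomotopy X Y, H.at 0 = f ∧ ∀ u, i ≫ H.at u = h.at u

/-- `(Z, B)` is an NDR pair: the inclusion `B ⊆ Z` is a Hurewicz cofibration, i.e.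
`([0,1] × B) ∪ ({0} × Z)` is a retract of `[0,1] × Z`. -/
def IsNDRPair {Z : Type} [TopologicalSpace Z] (B : Set Z) : Prop :=
  ∃ r : C(unitInterval × Z, unitInterval × Z),
    (∀ q, r q ∈ ({0} ×ˢ (Set.univ : Set Z)) ∪ ((Set.univ : Set unitInterval) ×ˢ B)) ∧
    (∀ q ∈ ({0} ×ˢ (Set.univ : Set Z)) ∪ ((Set.univ : Set unitInterval) ×ˢ B), r q = q)

/-- Auxiliary: minimum of two elements of the unit interval. -/
private def capI (a b : unitInterval) : unitInterval :=
  ⟨min a.1 b.1, ⟨le_min a.2.1 b.2.1, le_trans (min_le_left _ _) a.2.2⟩⟩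

private lemma continuous_capI {α : Type*} [TopologicalSpace α] {f g : α → unitInterval}
    (hf : Continuous f) (hg : Continuous g) : Continuous fun x => capI (f x) (g x) :=
  Continuous.subtype_mk ((continuous_subtype_val.comp hf).min (continuous_subtype_val.comp hg)) _

/-- The time-component of an `SHomotopy` is constant (the zero-skeletons are discrete
and the interval is connected). -/
private lemma shomotopy_hs_const {X Y : Flow'} (sh : SHomotopy X Y) (u : unitInterval)
    (b : X.State) : sh.hs u b = sh.hs 0 b := by
  letI : TopologicalSpace X.State := ⊥
  letI : TopologicalSpace Y.State := ⊥
  haveI : DiscreteTopology Y.State := ⟨rfl⟩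
  have hcont : Continuous fun t : unitInterval => sh.hs t b :=
    sh.continuous_hs.comp (continuous_id.prodMk continuous_const)
  exact ((IsLocallyConstant.iff_continuous _).mpr hcont).apply_eq_of_preconnectedSpace u 0

/-- The key topological fact (a version of Strøm's theorem, valid without any closedness
assumption on `B`): given a retraction `r` of `[0,1] × Z` onto `({0} × Z) ∪ ([0,1] × B)`,
the map glueing `f` (on the time-zero part) and `h` (on the `B`-part) along `r`
is continuous. -/
private lemma ndr_glue_continuous {Z P : Type} [TopologicalSpace Z] [TopologicalSpace P]
    (B : Set Z) (r : C(unitInterval × Z, unitInterval × Z))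
    (hr1 : ∀ q, (r q).1 = 0 ∨ (r q).2 ∈ B)
    (hr2 : ∀ q : unitInterval × Z, q.1 = 0 ∨ q.2 ∈ B → r q = q)
    (f : Z → P) (hf : Continuous f)
    (h : unitInterval → ↥B → P)
    (hh : Continuous fun q : unitInterval × ↥B => h q.1 q.2)
    (hfb : ∀ b : ↥B, h 0 b = f b.val) :
    Continuous fun q : unitInterval × Z =>
      if hq : (r q).1 = 0 then f (r q).2
      else h (r q).1 ⟨(r q).2, (hr1 q).resolve_left hq⟩ := by
  set F : unitInterval × Z → P := fun q =>
    if hq : (r q).1 = 0 then f (r q).2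
    else h (r q).1 ⟨(r q).2, (hr1 q).resolve_left hq⟩ with hFdef
  rw [continuous_iff_continuousAt]
  intro p₀
  by_cases hc : (r p₀).1 = 0
  · -- the image of `p₀` under `r` is at time `0`
    have hFp : F p₀ = f (r p₀).2 := by rw [hFdef]; exact dif_pos hc
    rw [continuousAt_def, hFp]
    intro A hA
    obtain ⟨V, hVA, hVopen, hVmem⟩ := mem_nhds_iff.mp hA
    suffices hV : F ⁻¹' V ∈ 𝓝 p₀ by
      exact Filter.mem_of_superset hV (Set.preimage_mono hVA)
    by_cases hcl : (r p₀).2 ∈ closure B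
    · -- hard case: the target point is in the closure of `B`
      have h1st : ∀ s : unitInterval, (r (s, (r p₀).2)).1 = s := by
        intro s
        have heq : Set.EqOn (fun z => (r (s, z)).1) (fun _ => s) B := by
          intro b hb
          simp only
          rw [hr2 (s, b) (Or.inr hb)]
        exact heq.closure (continuous_fst.comp (r.continuous.comp (Continuous.prodMk_right s)))
          continuous_const hcl
      -- choose a small positive time `sstar`
      have hψ : Continuous fun s : unitInterval => f ((r (s, (r p₀).2)).2) :=
        hf.comp (continuous_snd.comp (r.continuous.comp (continuous_id.prodMk continuous_const)))
      have hψ0 : f ((r ((0 : unitInterval), (r p₀).2)).2) ∈ V := by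
        rw [hr2 ((0 : unitInterval), (r p₀).2) (Or.inl rfl)]
        exact hVmem
      have hO : {s : unitInterval | f ((r (s, (r p₀).2)).2) ∈ V} ∈ 𝓝 (0 : unitInterval) :=
        hψ.continuousAt.preimage_mem_nhds (hVopen.mem_nhds hψ0)
      obtain ⟨ε, hε, hball⟩ := Metric.mem_nhds_iff.mp hO
      set sstar : unitInterval :=
        ⟨min (ε/2) 1, le_min (by linarith) zero_le_one, min_le_right _ _⟩ with hsstardef
      have hspos : (0:ℝ) < (sstar : ℝ) := lt_min (by linarith) one_pos
      have hsne : sstar ≠ 0 := by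
        intro hteq
        rw [hteq] at hspos
        exact lt_irrefl _ hspos
      have hsball : sstar ∈ Metric.ball (0 : unitInterval) ε := by
        rw [Metric.mem_ball, Subtype.dist_eq, Real.dist_eq]
        have h0 : (((0 : unitInterval)) : ℝ) = 0 := rfl
        rw [h0, sub_zero, abs_of_nonneg (le_of_lt hspos)]
        exact lt_of_le_of_lt (min_le_left _ _) (by linarith)
      have hsV : f ((r (sstar, (r p₀).2)).2) ∈ V := hball hsball
      -- the capped-homotopy auxiliary map
      set G : (unitInterval × unitInterval) × Z → P := fun w =>
        if hw : (r (w.1.2, w.2)).1 = 0 then f (r (w.1.2, w.2)).2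
        else h (capI (r (w.1.2, w.2)).1 w.1.1)
          ⟨(r (w.1.2, w.2)).2, (hr1 _).resolve_left hw⟩ with hGdef
      have key : ∀ (w : (unitInterval × unitInterval) × Z) (hw : (r (w.1.2, w.2)).1 ≠ 0),
          G w = h (capI (r (w.1.2, w.2)).1 w.1.1)
            ⟨(r (w.1.2, w.2)).2, (hr1 _).resolve_left hw⟩ := by
        intro w hw
        rw [hGdef]
        exact dif_neg hw
      have hrw : Continuous fun w : (unitInterval × unitInterval) × Z => r (w.1.2, w.2) :=
        r.continuous.comp ((continuous_snd.comp continuous_fst).prodMk continuous_snd)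
      have hDopen : IsOpen {w : (unitInterval × unitInterval) × Z | (r (w.1.2, w.2)).1 ≠ 0} :=
        isOpen_ne.preimage (continuous_fst.comp hrw)
      have hGcont : ContinuousOn G {w : (unitInterval × unitInterval) × Z |
          (r (w.1.2, w.2)).1 ≠ 0} := by
        rw [continuousOn_iff_continuous_restrict]
        have hres : Set.restrict {w : (unitInterval × unitInterval) × Z |
            (r (w.1.2, w.2)).1 ≠ 0} G = fun w =>
            h (capI (r (w.val.1.2, w.val.2)).1 w.val.1.1)
              ⟨(r (w.val.1.2, w.val.2)).2, (hr1 _).resolve_left w.2⟩ := by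
          funext w
          exact key w.val w.2
        refine (congrArg Continuous hres).mpr ?_
        refine hh.comp (Continuous.prodMk ?_ ?_)
        · exact continuous_capI (continuous_fst.comp (hrw.comp continuous_subtype_val))
            ((continuous_fst.comp continuous_fst).comp continuous_subtype_val)
        · exact Continuous.subtype_mk (continuous_snd.comp (hrw.comp continuous_subtype_val))
            (fun w => (hr1 _).resolve_left w.2)
      have hw₁mem : (((0 : unitInterval), sstar), (r p₀).2) ∈
          {w : (unitInterval × unitInterval) × Z | (r (w.1.2, w.2)).1 ≠ 0} := by
        show (r (sstar, (r p₀).2)).1 ≠ 0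
        rw [h1st sstar]
        exact hsne
      have hGat : ContinuousAt G (((0 : unitInterval), sstar), (r p₀).2) :=
        hGcont.continuousAt (hDopen.mem_nhds hw₁mem)
      have hGval : G (((0 : unitInterval), sstar), (r p₀).2) ∈ V := by
        have hne : (r (sstar, (r p₀).2)).1 ≠ 0 := by
          rw [h1st sstar]; exact hsne
        have h₁ := key (((0 : unitInterval), sstar), (r p₀).2) hne
        rw [h₁]
        have hcap : capI (r (sstar, (r p₀).2)).1 (0 : unitInterval) = 0 := by
          apply Subtype.ext
          exact min_eq_right (r (sstar, (r p₀).2)).1.2.1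
        rw [hcap, hfb]
        exact hsV
      have hGnhds : {w : (unitInterval × unitInterval) × Z | G w ∈ V} ∈
          𝓝 (((0 : unitInterval), sstar), (r p₀).2) :=
        hGat.preimage_mem_nhds (hVopen.mem_nhds hGval)
      obtain ⟨U₁, M, hU₁open, hU₁mem, hMopen, hMmem, hprod⟩ := mem_nhds_prod_iff'.mp hGnhds
      -- the neighbourhood of `0` in the time coordinate
      set U₀ : Set unitInterval := {t : unitInterval | (t, sstar) ∈ U₁ ∧ (t : ℝ) < (sstar : ℝ)}
        with hU₀def
      have hU₀open : IsOpen U₀ := by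
        apply IsOpen.inter
        · exact hU₁open.preimage (continuous_id.prodMk continuous_const)
        · exact (isOpen_Iio (a := (sstar : ℝ))).preimage continuous_subtype_val
      have hU₀mem : (0 : unitInterval) ∈ U₀ := ⟨hU₁mem, hspos⟩
      -- the final neighbourhood
      have hNmem : r ⁻¹' {q : unitInterval × Z | q.1 ∈ U₀ ∧ q.2 ∈ M} ∩
          {q : unitInterval × Z | f (r q).2 ∈ V} ∈ 𝓝 p₀ := by
        apply Filter.inter_mem
        · apply IsOpen.mem_nhds
          · exact ((hU₀open.preimage continuous_fst).inter
              (hMopen.preimage continuous_snd)).preimage r.continuous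
          · refine ⟨?_, hMmem⟩
            rw [hc]
            exact hU₀mem
        · exact (hVopen.preimage (hf.comp (continuous_snd.comp r.continuous))).mem_nhds hVmem
      refine Filter.mem_of_superset hNmem ?_
      rintro q ⟨hq1, hq2⟩
      by_cases hq : (r q).1 = 0
      · show F q ∈ V
        have : F q = f (r q).2 := by rw [hFdef]; exact dif_pos hq
        rw [this]
        exact hq2
      · have hB : (r q).2 ∈ B := (hr1 q).resolve_left hq
        have e : r (sstar, (r q).2) = (sstar, (r q).2) := hr2 _ (Or.inr hB)
        have hwin : (((r q).1, sstar), (r q).2) ∈ U₁ ×ˢ M := ⟨hq1.1.1, hq1.2⟩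
        have hGw : G (((r q).1, sstar), (r q).2) ∈ V := hprod hwin
        have hne : (r (sstar, (r q).2)).1 ≠ 0 := by
          rw [e]; exact hsne
        rw [key (((r q).1, sstar), (r q).2) hne] at hGw
        have ecap : capI (r (sstar, (r q).2)).1 (r q).1 = (r q).1 := by
          apply Subtype.ext
          show min ((r (sstar, (r q).2)).1 : ℝ) ((r q).1 : ℝ) = ((r q).1 : ℝ)
          rw [congrArg Prod.fst e]
          exact min_eq_right (le_of_lt hq1.1.2)
        have esub : (⟨(r (sstar, (r q).2)).2,
            (hr1 ((((r q).1, sstar), (r q).2).1.2, (((r q).1, sstar), (r q).2).2)).resolve_left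
              hne⟩ : ↥B) = ⟨(r q).2, hB⟩ :=
          Subtype.ext ((congrArg Prod.snd e).trans rfl)
        have hFq : F q = h ((r q).1) ⟨(r q).2, hB⟩ := by
          rw [hFdef]; exact dif_neg hq
        show F q ∈ V
        rw [hFq]
        rw [ecap, esub] at hGw
        exact hGw
    · -- easy case: the target point is not in the closure of `B`
      refine Filter.mem_of_superset (Filter.inter_mem
        (((isClosed_closure (s := B)).isOpen_compl.preimage
          (continuous_snd.comp r.continuous)).mem_nhds hcl)
        ((hVopen.preimage (hf.comp (continuous_snd.comp r.continuous))).mem_nhds hVmem)) ?_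
      rintro q ⟨hq1, hq2⟩
      by_cases hq : (r q).1 = 0
      · show F q ∈ V
        have : F q = f (r q).2 := by rw [hFdef]; exact dif_pos hq
        rw [this]
        exact hq2
      · exact absurd (subset_closure ((hr1 q).resolve_left hq)) hq1
  · -- the image of `p₀` under `r` is at positive time: locally the `h`-branch
    have hU : IsOpen {q : unitInterval × Z | (r q).1 ≠ 0} :=
      isOpen_ne.preimage (continuous_fst.comp r.continuous)
    apply ContinuousOn.continuousAt ?_ (hU.mem_nhds hc)
    rw [continuousOn_iff_continuous_restrict]
    have hres : Set.restrict {q : unitInterval × Z | (r q).1 ≠ 0} F = fun q =>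
        h (r q.val).1 ⟨(r q.val).2, (hr1 q.val).resolve_left q.2⟩ := by
      funext q
      rw [hFdef]
      exact dif_neg q.2
    refine (congrArg Continuous hres).mpr ?_
    refine hh.comp (Continuous.prodMk ?_ ?_)
    · exact (continuous_fst.comp r.continuous).comp continuous_subtype_val
    · exact Continuous.subtype_mk ((continuous_snd.comp r.continuous).comp continuous_subtype_val)
        (fun q => (hr1 q.val).resolve_left q.2)

/-- **Statement 8.** If `(Z, ∂Z)` is an NDR pair, then the canonical morphism of
flows `Glob(∂Z) ⟶ Glob(Z)` satisfies the S-homotopy extension property. -/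
theorem glob_ndr_hasSHEP {Z : Type} [TopologicalSpace Z] (B : Set Z)
    (h : IsNDRPair B) :
    HasSHEP (globHom (⟨Subtype.val, continuous_subtype_val⟩ : C(↥B, Z))) := by
  obtain ⟨r, hr1', hr2'⟩ := h
  have hr1 : ∀ q, (r q).1 = 0 ∨ (r q).2 ∈ B := by
    intro q
    have hq := hr1' q
    simp only [Set.mem_union, Set.mem_prod, Set.mem_singleton_iff, Set.mem_univ, and_true,
      true_and] at hq
    exact hq
  have hr2 : ∀ q : unitInterval × Z, q.1 = 0 ∨ q.2 ∈ B → r q = q := by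
    intro q hq
    apply hr2'
    simp only [Set.mem_union, Set.mem_prod, Set.mem_singleton_iff, Set.mem_univ, and_true,
      true_and]
    exact hq
  intro Y f sh hsh0
  have hpath0 : ∀ b : ↥B, sh.hp 0 b = FlowHom.toPath f b.val := fun b =>
    congrFun (congrArg FlowHom.toPath hsh0) b
  have hstate0 : ∀ bo : Bool, sh.hs 0 bo = FlowHom.toState f bo := fun bo =>
    congrFun (congrArg FlowHom.toState hsh0) bo
  have hstate : ∀ (u : unitInterval) (bo : Bool), sh.hs u bo = FlowHom.toState f bo := fun u bo =>
    (shomotopy_hs_const sh u bo).trans (hstate0 bo)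
  refine ⟨{ hs := fun _ b => FlowHom.toState f b
            hp := fun u z =>
              if hq : (r (u, z)).1 = 0 then FlowHom.toPath f (r (u, z)).2
              else sh.hp (r (u, z)).1 ⟨(r (u, z)).2, (hr1 (u, z)).resolve_left hq⟩
            continuous_hp := ?_
            continuous_hs := ?_
            s_hp := ?_
            t_hp := ?_
            comp_hp := ?_ }, ?_, ?_⟩
  · -- continuity of the path-space homotopy
    have hcont := ndr_glue_continuous B r hr1 hr2 (FlowHom.toPath f) (FlowHom.continuous_toPath f) sh.hp
      sh.continuous_hp (fun b => hpath0 b)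
    exact hcont.comp (continuous_fst.prodMk continuous_snd)
  · -- continuity of the state homotopy
    letI : TopologicalSpace (Glob Z).State := ⊥
    letI : TopologicalSpace Y.State := ⊥
    exact continuous_bot.comp continuous_snd
  · -- compatibility with sources
    intro u z
    show Y.s (if hq : (r (u, z)).1 = 0 then FlowHom.toPath f (r (u, z)).2
      else sh.hp (r (u, z)).1 ⟨(r (u, z)).2, (hr1 (u, z)).resolve_left hq⟩) = FlowHom.toState f false
    by_cases hq : (r (u, z)).1 = 0
    · rw [dif_pos hq]
      exact FlowHom.s_toPath f _
    · rw [dif_neg hq]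
      exact (sh.s_hp _ _).trans (hstate _ _)
  · -- compatibility with targets
    intro u z
    show Y.t (if hq : (r (u, z)).1 = 0 then FlowHom.toPath f (r (u, z)).2
      else sh.hp (r (u, z)).1 ⟨(r (u, z)).2, (hr1 (u, z)).resolve_left hq⟩) = FlowHom.toState f true
    by_cases hq : (r (u, z)).1 = 0
    · rw [dif_pos hq]
      exact FlowHom.t_toPath f _
    · rw [dif_neg hq]
      exact (sh.t_hp _ _).trans (hstate _ _)
  · -- compatibility with composition: vacuous for globes
    intro u x y hxy
    exact absurd hxy (Glob.not_composable x y)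
  · -- the homotopy starts at `f`
    apply FlowHom.ext'
    · rfl
    · funext z
      have e : r ((0 : unitInterval), z) = ((0 : unitInterval), z) := hr2 _ (Or.inl rfl)
      have hpos : (r ((0 : unitInterval), z)).1 = 0 := by rw [e]
      exact (dif_pos hpos).trans (by rw [e])
  · -- the homotopy extends `sh`
    intro u
    apply FlowHom.ext'
    · funext bo
      exact (hstate u bo).symm
    · funext b
      show (if hq : (r (u, Subtype.val b)).1 = 0 then FlowHom.toPath f (r (u, Subtype.val b)).2
        else sh.hp (r (u, Subtype.val b)).1
          ⟨(r (u, Subtype.val b)).2, (hr1 (u, Subtype.val b)).resolve_left hq⟩) = sh.hp u b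
      have e : r (u, Subtype.val b) = (u, Subtype.val b) := hr2 _ (Or.inr b.2)
      by_cases hu : u = 0
      · subst hu
        have hpos : (r ((0 : unitInterval), Subtype.val b)).1 = 0 := by rw [e]
        exact (dif_pos hpos).trans (by rw [e]; exact (hpath0 b).symm)
      · have hneg : (r (u, Subtype.val b)).1 ≠ 0 := by rw [e]; exact hu
        refine (dif_neg hneg).trans ?_
        have esub : (⟨(r (u, Subtype.val b)).2,
            (hr1 (u, Subtype.val b)).resolve_left hneg⟩ : ↥B) = b :=
          Subtype.ext ((congrArg Prod.snd e).trans rfl)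
        rw [esub, congrArg Prod.fst e]
end
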